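/- The neighbourhood corona K_3 ⋆ K_m is Class 1: its pebbling number equals its number of vertices plus one, i.e., π(K_3 ⋆ K_m) = 3m + 4. -/
import Mathlib



open SimpleGraph

variable {V : Type*}

/-- A single pebbling move: remove two pebbles from `u`, add one to a neighbor `v`. -/
def PebblingMove (G : SimpleGraph V) (c c' : V → ℕ) : Prop :=
  ∃ u v, G.Adj u v ∧ 2 ≤ c u ∧
    c' u = c u - 2 ∧ c' v = c v + 1 ∧ ∀ w, w ≠ u → w ≠ v → c' w = c w

/-- `c'` is reachable from `c` by a sequence of pebbling moves. -/
def PebblingReach (G : SimpleGraph V) (c c' : V → ℕ) : Prop :=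
  Relation.ReflTransGen (PebblingMove G) c c'

/-- A configuration is `t`-fold `r`-solvable if some sequence of pebbling moves
places at least `t` pebbles on `r`. -/
def PebblingSolvable (G : SimpleGraph V) (c : V → ℕ) (r : V) (t : ℕ) : Prop :=
  ∃ c', PebblingReach G c c' ∧ t ≤ c' r

variable [Fintype V]

/-- The set of sizes `m` such that every configuration of size `m` is
`t`-fold `r`-solvable for every target `r`. -/
def pebblingSet (G : SimpleGraph V) (t : ℕ) : Set ℕ :=
  {m | ∀ c : V → ℕ, (∑ v, c v) = m → ∀ r : V, PebblingSolvable G c r t}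

/-- The `t`-fold pebbling number, as an extended natural number
(`⊤` when no bound exists, e.g. for disconnected graphs). -/
noncomputable def pebblingNumber (G : SimpleGraph V) (t : ℕ) : ℕ∞ :=
  sInf ((↑) '' pebblingSet G t)

/-- A configuration is cover-solvable if pebbling moves can reach a configuration
with at least one pebble on every vertex. -/
def IsCoverSolvable (G : SimpleGraph V) (c : V → ℕ) : Prop :=
  ∃ c', PebblingReach G c c' ∧ ∀ v : V, 1 ≤ c' v

/-- The cover pebbling number. -/
noncomputable def coverPebblingNumber (G : SimpleGraph V) : ℕ∞ :=
  sInf ((↑) '' {m : ℕ | ∀ c : V → ℕ, (∑ v, c v) = m → IsCoverSolvable G c})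

/-- The optimal pebbling number: the least size of a single configuration that is
`r`-solvable for every vertex `r`. -/
noncomputable def optimalPebblingNumber (G : SimpleGraph V) : ℕ∞ :=
  sInf ((↑) '' {m : ℕ | ∃ c : V → ℕ, (∑ v, c v) = m ∧ ∀ r : V, PebblingSolvable G c r 1})

/-- The neighbourhood corona `G ⋆ H`. -/
def ncoronaProd {α β : Type*} (G : SimpleGraph α) (H : SimpleGraph β) :
    SimpleGraph (α ⊕ α × β) :=
  SimpleGraph.fromRel (fun u v =>
    match u, v with
    | Sum.inl a, Sum.inl b => G.Adj a b
    | Sum.inl a, Sum.inr p => G.Adj a p.1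
    | Sum.inr p, Sum.inr q => p.1 = q.1 ∧ H.Adj p.2 q.2
    | _, _ => False)

set_option linter.unusedSectionVars false
set_option linter.unusedVariables false

-- ===== aux =====
set_option linter.unusedSectionVars false

namespace PebAux

abbrev KG (m : ℕ) : SimpleGraph (Fin 3 ⊕ Fin 3 × Fin m) :=
  ncoronaProd (⊤ : SimpleGraph (Fin 3)) (⊤ : SimpleGraph (Fin m))

lemma adj_ll {m : ℕ} {a b : Fin 3} : (KG m).Adj (Sum.inl a) (Sum.inl b) ↔ a ≠ b := by
  simp [KG, ncoronaProd, SimpleGraph.fromRel_adj]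
  tauto

lemma adj_lr {m : ℕ} {a : Fin 3} {p : Fin 3 × Fin m} :
    (KG m).Adj (Sum.inl a) (Sum.inr p) ↔ a ≠ p.1 := by
  simp [KG, ncoronaProd, SimpleGraph.fromRel_adj]

lemma adj_rl {m : ℕ} {a : Fin 3} {p : Fin 3 × Fin m} :
    (KG m).Adj (Sum.inr p) (Sum.inl a) ↔ a ≠ p.1 := by
  rw [SimpleGraph.adj_comm]; exact adj_lr

lemma adj_rr {m : ℕ} {p q : Fin 3 × Fin m} :
    (KG m).Adj (Sum.inr p) (Sum.inr q) ↔ p.1 = q.1 ∧ p.2 ≠ q.2 := by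
  simp only [KG, ncoronaProd, SimpleGraph.fromRel_adj, SimpleGraph.top_adj]
  constructor
  · rintro ⟨hne, h | h⟩
    · exact h
    · exact ⟨h.1.symm, h.2.symm⟩
  · rintro ⟨h1, h2⟩
    refine ⟨?_, Or.inl ⟨h1, h2⟩⟩
    intro he; injection he with he'; rw [he'] at h2; exact h2 rfl

variable [DecidableEq V]

/-- result of a single move -/
def mv (c : V → ℕ) (u v : V) : V → ℕ :=
  Function.update (Function.update c u (c u - 2)) v (c v + 1)

lemma mv_src {c : V → ℕ} {u v : V} (h : u ≠ v) : mv c u v u = c u - 2 := by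
  simp [mv, Function.update_apply, h]

lemma mv_tgt (c : V → ℕ) (u v : V) : mv c u v v = c v + 1 := by simp [mv]

lemma mv_other {c : V → ℕ} {u v w : V} (h1 : w ≠ u) (h2 : w ≠ v) : mv c u v w = c w := by
  simp [mv, Function.update_apply, h1, h2]

lemma move_mv (G : SimpleGraph V) (c : V → ℕ) {u v : V} (h : G.Adj u v) (h2 : 2 ≤ c u) :
    PebblingMove G c (mv c u v) :=
  ⟨u, v, h, h2, mv_src h.ne, mv_tgt c u v, fun w hwu hwv => mv_other hwu hwv⟩

lemma reach_mv (G : SimpleGraph V) (c : V → ℕ) {u v : V} (h : G.Adj u v) (h2 : 2 ≤ c u) :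
    PebblingReach G c (mv c u v) :=
  Relation.ReflTransGen.single (move_mv G c h h2)

lemma reach_trans {G : SimpleGraph V} {a b c : V → ℕ}
    (h1 : PebblingReach G a b) (h2 : PebblingReach G b c) : PebblingReach G a c :=
  Relation.ReflTransGen.trans h1 h2

/-- trivial solver -/
lemma solv0 {G : SimpleGraph V} {c : V → ℕ} {r : V} (h : 1 ≤ c r) :
    PebblingSolvable G c r 1 := ⟨c, Relation.ReflTransGen.refl, h⟩

/-- one move: a heavy neighbor -/
lemma solv1 {G : SimpleGraph V} {c : V → ℕ} {r v : V} (hadj : G.Adj v r) (h2 : 2 ≤ c v) :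
    PebblingSolvable G c r 1 :=
  ⟨mv c v r, reach_mv G c hadj h2, by rw [mv_tgt]; omega⟩

/-- two moves: heavy v, occupied w adjacent to r -/
lemma solv2 {G : SimpleGraph V} {c : V → ℕ} {r v w : V} (h1 : G.Adj v w) (h2 : G.Adj w r)
    (hv : 2 ≤ c v) (hw : 1 ≤ c w) : PebblingSolvable G c r 1 := by
  refine ⟨mv (mv c v w) w r, reach_trans (reach_mv G c h1 hv) (reach_mv G _ h2 ?_), ?_⟩
  · rw [mv_tgt]; omega
  · rw [mv_tgt]; omega

/-- three moves from a 4-pile at distance two -/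
lemma solv4 {G : SimpleGraph V} {c : V → ℕ} {r v w : V} (h1 : G.Adj v w) (h2 : G.Adj w r)
    (hv : 4 ≤ c v) : PebblingSolvable G c r 1 := by
  have hvw := h1.ne
  refine ⟨mv (mv (mv c v w) v w) w r,
    reach_trans (reach_mv G c h1 (by omega))
      (reach_trans (reach_mv G _ h1 ?_) (reach_mv G _ h2 ?_)), ?_⟩
  · rw [mv_src hvw]; omega
  · rw [mv_tgt, mv_tgt]; omega
  · rw [mv_tgt]; omega

/-- four moves: u→p, p→q, v→q, q→r -/
lemma solv_chain {G : SimpleGraph V} {c : V → ℕ} {r u p q v : V}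
    (h1 : G.Adj u p) (h2 : G.Adj p q) (h3 : G.Adj v q) (h4 : G.Adj q r)
    (hvu : v ≠ u) (hvp : v ≠ p)
    (hu : 2 ≤ c u) (hp : 1 ≤ c p) (hv : 2 ≤ c v) : PebblingSolvable G c r 1 := by
  have e1 : (mv c u p) p = c p + 1 := mv_tgt c u p
  have e2 : (mv (mv c u p) p q) v = c v := by
    rw [mv_other hvp h3.ne, mv_other hvu hvp]
  refine ⟨_, reach_trans (reach_mv G c h1 hu)
    (reach_trans (reach_mv G _ h2 (by rw [e1]; omega))
      (reach_trans (reach_mv G _ h3 (by rw [e2]; omega))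
        (reach_mv G _ h4 ?_))), ?_⟩
  · rw [mv_tgt, mv_tgt]; omega
  · rw [mv_tgt]; omega

/-- monotonicity: more pebbles can simulate -/
lemma reach_mono {G : SimpleGraph V} {c d c' : V → ℕ} (hle : ∀ w, c w ≤ d w)
    (h : PebblingReach G c c') : ∃ d', PebblingReach G d d' ∧ ∀ w, c' w ≤ d' w := by
  induction h with
  | refl => exact ⟨d, Relation.ReflTransGen.refl, hle⟩
  | tail _ hstep ih =>
    obtain ⟨d', hd', hled⟩ := ih
    obtain ⟨u, v, hadj, hcu, h1, h2, h3⟩ := hstep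
    refine ⟨mv d' u v, reach_trans hd' (reach_mv G d' hadj (le_trans hcu (hled u))), ?_⟩
    intro w
    rcases eq_or_ne w u with rfl | hwu
    · rw [mv_src hadj.ne, h1]; have := hled w; omega
    · rcases eq_or_ne w v with rfl | hwv
      · rw [mv_tgt, h2]; have := hled w; omega
      · rw [mv_other hwu hwv, h3 w hwu hwv]; exact hled w

lemma solvable_mono {G : SimpleGraph V} {c d : V → ℕ} {r : V} (hle : ∀ w, c w ≤ d w)
    (h : PebblingSolvable G c r 1) : PebblingSolvable G d r 1 := by
  obtain ⟨c', hr, hc⟩ := h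
  obtain ⟨d', hd, hled⟩ := reach_mono hle hr
  exact ⟨d', hd, le_trans hc (hled r)⟩

/-- if no vertex has two pebbles, no move is possible -/
lemma reach_frozen {G : SimpleGraph V} {c c' : V → ℕ} (hc : ∀ w, c w ≤ 1)
    (h : PebblingReach G c c') : c' = c := by
  induction h with
  | refl => rfl
  | tail hr hstep ih =>
    obtain ⟨u, v, _, hcu, _⟩ := hstep
    rw [ih] at hcu; exact absurd (hc u) (by omega)

/-- shrink a configuration to any smaller total -/
lemma exists_shrink [Fintype V] (c : V → ℕ) (k : ℕ) (hk : k ≤ ∑ v, c v) :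
    ∃ d : V → ℕ, (∀ w, d w ≤ c w) ∧ (∑ v, d v) = k := by
  set n := ∑ v, c v with hn
  clear_value n
  induction n generalizing c with
  | zero => exact ⟨c, fun w => le_refl _, by omega⟩
  | succ n ih =>
    rcases eq_or_lt_of_le hk with heq | hlt
    · exact ⟨c, fun w => le_refl _, by omega⟩
    · have : ∃ v, 1 ≤ c v := by
        by_contra hall
        push_neg at hall
        have : ∑ v, c v = 0 := Finset.sum_eq_zero (fun v _ => by have := hall v; omega)
        omega
      obtain ⟨v0, hv0⟩ := this
      have h1 : ∑ v, c v = c v0 + ∑ x ∈ Finset.univ.erase v0, c x :=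
        (Finset.add_sum_erase _ c (Finset.mem_univ v0)).symm
      have h2 : ∑ v, (Function.update c v0 (c v0 - 1)) v
          = (c v0 - 1) + ∑ x ∈ Finset.univ.erase v0, c x := by
        rw [← Finset.add_sum_erase _ _ (Finset.mem_univ v0), Function.update_self]
        congr 1
        exact Finset.sum_congr rfl (fun x hx =>
          Function.update_of_ne (Finset.ne_of_mem_erase hx) _ _)
      obtain ⟨d, hd1, hd2⟩ := ih (Function.update c v0 (c v0 - 1)) (by omega) (by omega)
      refine ⟨d, fun w => ?_, hd2⟩
      rcases eq_or_ne w v0 with rfl | hw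
      · have := hd1 w; rw [Function.update_self] at this; omega
      · have := hd1 w; rwa [Function.update_of_ne hw] at this

/-- two heavies pushing to a common neighbor of r -/
lemma solv22 {G : SimpleGraph V} {c : V → ℕ} {r u v w : V}
    (huv : u ≠ v) (h1 : G.Adj u w) (h2 : G.Adj v w) (h3 : G.Adj w r)
    (hu : 2 ≤ c u) (hv : 2 ≤ c v) : PebblingSolvable G c r 1 := by
  have e1 : (mv c u w) v = c v := mv_other (Ne.symm huv) h2.ne
  refine ⟨_, reach_trans (reach_mv G c h1 hu)
    (reach_trans (reach_mv G _ h2 (by rw [e1]; omega)) (reach_mv G _ h3 ?_)), ?_⟩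
  · rw [mv_tgt, mv_tgt]; omega
  · rw [mv_tgt]; omega

section Sums

lemma fin3_univ {i j k : Fin 3} (hij : i ≠ j) (hik : i ≠ k) (hjk : j ≠ k) :
    (Finset.univ : Finset (Fin 3)) = {i, j, k} := by
  symm
  apply Finset.eq_univ_of_card
  rw [Finset.card_insert_of_notMem (by simp [hij, hik]),
    Finset.card_insert_of_notMem (by simp [hjk]), Finset.card_singleton]
  simp

lemma fin3_sum {i j k : Fin 3} (hij : i ≠ j) (hik : i ≠ k) (hjk : j ≠ k) (f : Fin 3 → ℕ) :
    ∑ a, f a = f i + f j + f k := by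
  rw [fin3_univ hij hik hjk, Finset.sum_insert (by simp [hij, hik]),
    Finset.sum_insert (by simp [hjk]), Finset.sum_singleton, add_assoc]

lemma sum_le_one {m : ℕ} {f : Fin m → ℕ} (h : ∀ y, f y ≤ 1) : ∑ y, f y ≤ m := by
  calc ∑ y, f y ≤ ∑ _y : Fin m, 1 := Finset.sum_le_sum (fun y _ => h y)
  _ = m := by simp

lemma sum_le_heavy {m : ℕ} {f : Fin m → ℕ} (h3 : ∀ y, f y ≤ 3)
    (huniq : ∀ y z, 2 ≤ f y → 2 ≤ f z → y = z) : ∑ y, f y ≤ m + 2 := by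
  by_cases hex : ∃ y, 2 ≤ f y
  · obtain ⟨y0, hy0⟩ := hex
    rw [← Finset.add_sum_erase _ _ (Finset.mem_univ y0)]
    have h2 : ∑ x ∈ Finset.univ.erase y0, f x ≤ m - 1 := by
      have := Finset.sum_le_card_nsmul (Finset.univ.erase y0) f 1 (fun x hx => by
        by_contra hcge
        push_neg at hcge
        exact Finset.ne_of_mem_erase hx (huniq x y0 (by omega) hy0))
      simpa [Finset.card_erase_of_mem] using this
    have := h3 y0
    have hm' : 0 < m := y0.pos
    omega
  · push_neg at hex
    have : ∑ y, f y ≤ m := sum_le_one (fun y => by have := hex y; omega)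
    omega

end Sums

section Main

open Sum

variable {m : ℕ}

/-- decomposition of total over the corona vertex type -/
lemma total_decomp {i j k : Fin 3} (hij : i ≠ j) (hik : i ≠ k) (hjk : j ≠ k)
    (c : (Fin 3 ⊕ Fin 3 × Fin m) → ℕ) :
    ∑ v, c v = (c (inl i) + c (inl j) + c (inl k)) +
      ((∑ y, c (inr (i, y))) + (∑ y, c (inr (j, y))) + (∑ y, c (inr (k, y)))) := by
  rw [Fintype.sum_sum_type, Fintype.sum_prod_type]
  rw [fin3_sum hij hik hjk (fun a => c (inl a)),
    fin3_sum hij hik hjk (fun a => ∑ y, c (inr (a, y)))]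

lemma hub_case (hm : 1 ≤ m) {i j k : Fin 3} (hij : i ≠ j) (hik : i ≠ k) (hjk : j ≠ k)
    (c : (Fin 3 ⊕ Fin 3 × Fin m) → ℕ) (hc : ∑ v, c v = 3 * m + 4) :
    PebblingSolvable (KG m) c (inl i) 1 := by
  by_cases h0 : 1 ≤ c (inl i)
  · exact solv0 h0
  by_cases hj1 : 2 ≤ c (inl j)
  · exact solv1 (adj_ll.mpr hij.symm) hj1
  by_cases hk1 : 2 ≤ c (inl k)
  · exact solv1 (adj_ll.mpr hik.symm) hk1
  by_cases hcj : ∃ y, 2 ≤ c (inr (j, y))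
  · obtain ⟨y, hy⟩ := hcj
    exact solv1 (adj_rl.mpr hij) hy
  by_cases hck : ∃ y, 2 ≤ c (inr (k, y))
  · obtain ⟨y, hy⟩ := hck
    exact solv1 (adj_rl.mpr hik) hy
  by_cases h4 : ∃ y, 4 ≤ c (inr (i, y))
  · obtain ⟨y, hy⟩ := h4
    exact solv4 (adj_rl.mpr hij.symm) (adj_ll.mpr hij.symm) hy
  by_cases h22 : ∃ y z, y ≠ z ∧ 2 ≤ c (inr (i, y)) ∧ 2 ≤ c (inr (i, z))
  · obtain ⟨y, z, hyz, hy, hz⟩ := h22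
    exact solv22 (by simp [hyz])
      (adj_rl.mpr hij.symm) (adj_rl.mpr hij.symm) (adj_ll.mpr hij.symm) hy hz
  push_neg at hcj hck h4 h22
  have hsi : ∑ y, c (inr (i, y)) ≤ m + 2 := by
    apply sum_le_heavy (fun y => by have := h4 y; omega)
    intro y z hy hz
    by_contra hne
    exact absurd hz (by have := h22 y z hne hy; omega)
  have hsj : ∑ y, c (inr (j, y)) ≤ m := sum_le_one (fun y => by have := hcj y; omega)
  have hsk : ∑ y, c (inr (k, y)) ≤ m := sum_le_one (fun y => by have := hck y; omega)
  rw [total_decomp hij hik hjk] at hc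
  have hjk1 : c (inl j) = 1 ∧ c (inl k) = 1 := by omega
  have hex : ∃ y, 2 ≤ c (inr (i, y)) := by
    by_contra hall
    push_neg at hall
    have : ∑ y, c (inr (i, y)) ≤ m := sum_le_one (fun y => by have := hall y; omega)
    omega
  obtain ⟨y, hy⟩ := hex
  exact solv2 (adj_rl.mpr hij.symm) (adj_ll.mpr hij.symm) hy (by omega)

lemma sum_le_punct {f : Fin m → ℕ} {x : Fin m} (hx : f x = 0) (h : ∀ y, y ≠ x → f y ≤ 1) :
    ∑ y, f y ≤ m - 1 := by
  rw [← Finset.add_sum_erase _ _ (Finset.mem_univ x), hx, zero_add]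
  have := Finset.sum_le_card_nsmul (Finset.univ.erase x) f 1
    (fun y hy => h y (Finset.ne_of_mem_erase hy))
  simpa [Finset.card_erase_of_mem] using this

lemma leaf_case (hm : 1 ≤ m) {i j k : Fin 3} (hij : i ≠ j) (hik : i ≠ k) (hjk : j ≠ k)
    (x : Fin m) (c : (Fin 3 ⊕ Fin 3 × Fin m) → ℕ) (hc : ∑ v, c v = 3 * m + 4) :
    PebblingSolvable (KG m) c (inr (i, x)) 1 := by
  -- basic adjacencies
  have aJR : (KG m).Adj (inl j) (inr (i, x)) := adj_lr.mpr hij.symm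
  have aKR : (KG m).Adj (inl k) (inr (i, x)) := adj_lr.mpr hik.symm
  have aCJK : ∀ y : Fin m, (KG m).Adj (inr (j, y)) (inl k) := fun y => adj_rl.mpr hjk.symm
  have aCKJ : ∀ y : Fin m, (KG m).Adj (inr (k, y)) (inl j) := fun y => adj_rl.mpr hjk
  have aIJ : (KG m).Adj (inl i) (inl j) := adj_ll.mpr hij
  have aIK : (KG m).Adj (inl i) (inl k) := adj_ll.mpr hik
  by_cases h0 : 1 ≤ c (inr (i, x))
  · exact solv0 h0
  by_cases hny : ∃ y, y ≠ x ∧ 2 ≤ c (inr (i, y))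
  · obtain ⟨y, hyx, hy⟩ := hny
    exact solv1 ((adj_rr (p := (i, y)) (q := (i, x))).mpr ⟨rfl, hyx⟩) hy
  by_cases hj1 : 2 ≤ c (inl j)
  · exact solv1 aJR hj1
  by_cases hk1 : 2 ≤ c (inl k)
  · exact solv1 aKR hk1
  by_cases h4j : ∃ y, 4 ≤ c (inr (j, y))
  · obtain ⟨y, hy⟩ := h4j
    exact solv4 (aCJK y) aKR hy
  by_cases h4k : ∃ y, 4 ≤ c (inr (k, y))
  · obtain ⟨y, hy⟩ := h4k
    exact solv4 (aCKJ y) aJR hy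
  by_cases h4i : 4 ≤ c (inl i)
  · exact solv4 aIJ aJR h4i
  by_cases h22j : ∃ y z, y ≠ z ∧ 2 ≤ c (inr (j, y)) ∧ 2 ≤ c (inr (j, z))
  · obtain ⟨y, z, hyz, hy, hz⟩ := h22j
    exact solv22 (by simp [hyz]) (aCJK y) (aCJK z) aKR hy hz
  by_cases h22k : ∃ y z, y ≠ z ∧ 2 ≤ c (inr (k, y)) ∧ 2 ≤ c (inr (k, z))
  · obtain ⟨y, z, hyz, hy, hz⟩ := h22k
    exact solv22 (by simp [hyz]) (aCKJ y) (aCKJ z) aJR hy hz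
  by_cases hAij : 2 ≤ c (inl i) ∧ ∃ y, 2 ≤ c (inr (j, y))
  · obtain ⟨hA, y, hy⟩ := hAij
    exact solv22 (by simp) aIK (aCJK y) aKR hA hy
  by_cases hAik : 2 ≤ c (inl i) ∧ ∃ y, 2 ≤ c (inr (k, y))
  · obtain ⟨hA, y, hy⟩ := hAik
    exact solv22 (by simp) aIJ (aCKJ y) aJR hA hy
  by_cases hjk2 : (∃ y, 2 ≤ c (inr (j, y))) ∧ 1 ≤ c (inl k)
  · obtain ⟨⟨y, hy⟩, hk⟩ := hjk2
    exact solv2 (aCJK y) aKR hy hk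
  by_cases hkj2 : (∃ y, 2 ≤ c (inr (k, y))) ∧ 1 ≤ c (inl j)
  · obtain ⟨⟨y, hy⟩, hj⟩ := hkj2
    exact solv2 (aCKJ y) aJR hy hj
  by_cases hAiAj : 2 ≤ c (inl i) ∧ 1 ≤ c (inl j)
  · exact solv2 aIJ aJR hAiAj.1 hAiAj.2
  by_cases hAiAk : 2 ≤ c (inl i) ∧ 1 ≤ c (inl k)
  · exact solv2 aIK aKR hAiAk.1 hAiAk.2
  by_cases hch : (∃ y, 2 ≤ c (inr (j, y))) ∧ (∃ z, 2 ≤ c (inr (k, z))) ∧ 1 ≤ c (inl i)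
  · obtain ⟨⟨y, hy⟩, ⟨z, hz⟩, hA⟩ := hch
    exact solv_chain (adj_rl.mpr hij) aIJ (adj_rl.mpr hjk) aJR
      (by simp [hjk.symm]) (by simp) hy hA hz
  -- no solution pattern: derive a contradiction from the total count
  exfalso
  push_neg at h0 hny hj1 hk1 h4j h4k h4i h22j h22k hAij hAik hjk2 hkj2 hAiAj hAiAk hch
  have hsi : ∑ y, c (inr (i, y)) ≤ m - 1 :=
    sum_le_punct (x := x) (show c (inr (i, x)) = 0 by omega)
      (fun y hy => by have := hny y hy; omega)
  have hsjH : ∑ y, c (inr (j, y)) ≤ m + 2 := by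
    apply sum_le_heavy (fun y => by have := h4j y; omega)
    intro y z hy hz
    by_contra hne
    exact absurd hz (by have := h22j y z hne hy; omega)
  have hskH : ∑ y, c (inr (k, y)) ≤ m + 2 := by
    apply sum_le_heavy (fun y => by have := h4k y; omega)
    intro y z hy hz
    by_contra hne
    exact absurd hz (by have := h22k y z hne hy; omega)
  rw [total_decomp hij hik hjk] at hc
  by_cases Hj : ∃ y, 2 ≤ c (inr (j, y))
  · by_cases Hk : ∃ y, 2 ≤ c (inr (k, y))
    · have hAk : c (inl k) = 0 := by have := hjk2 Hj; omega
      have hAj : c (inl j) = 0 := by have := hkj2 Hk; omega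
      have hAi : c (inl i) = 0 := by have := hch Hj Hk; omega
      omega
    · push_neg at Hk
      have hAk : c (inl k) = 0 := by have := hjk2 Hj; omega
      have hAi : c (inl i) ≤ 1 := by
        by_contra hA
        exact absurd Hj (by have := hAij (by omega); push_neg; exact this)
      have hsk : ∑ y, c (inr (k, y)) ≤ m := sum_le_one (fun y => by have := Hk y; omega)
      omega
  · push_neg at Hj
    have hsj : ∑ y, c (inr (j, y)) ≤ m := sum_le_one (fun y => by have := Hj y; omega)
    by_cases Hk : ∃ y, 2 ≤ c (inr (k, y))
    · have hAj : c (inl j) = 0 := by have := hkj2 Hk; omega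
      have hAi : c (inl i) ≤ 1 := by
        by_contra hA
        exact absurd Hk (by have := hAik (by omega); push_neg; exact this)
      omega
    · push_neg at Hk
      have hsk : ∑ y, c (inr (k, y)) ≤ m := sum_le_one (fun y => by have := Hk y; omega)
      by_cases hAi : 2 ≤ c (inl i)
      · have hAj : c (inl j) = 0 := by have := hAiAj hAi; omega
        have hAk : c (inl k) = 0 := by have := hAiAk hAi; omega
        omega
      · omega

end Main

section Lower

open Sum

variable {m : ℕ}

lemma fin3_cases : ∀ a : Fin 3, a = 0 ∨ a = 1 ∨ a = 2 := by decide

/-- number of "tokens" in copy `a` -/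
def T (a : Fin 3) (c : (Fin 3 ⊕ Fin 3 × Fin m) → ℕ) : ℕ := ∑ y, c (inr (a, y)) / 2

/-- the witness configuration of size `3m+3`: empty hubs, a pile of 3 in copies 1 and 2,
single pebbles elsewhere, target `inr (0, y0)` empty -/
def w0 (y0 : Fin m) : (Fin 3 ⊕ Fin 3 × Fin m) → ℕ := fun v =>
  Sum.elim (fun _ => 0)
    (fun p => if p.1 = 0 then (if p.2 = y0 then 0 else 1) else (if p.2 = y0 then 3 else 1)) v

/-- the invariant showing `w0` cannot reach the target -/
def Inv (y0 : Fin m) (c : (Fin 3 ⊕ Fin 3 × Fin m) → ℕ) : Prop :=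
  c (inr (0, y0)) = 0 ∧
  (∀ y, y ≠ y0 → c (inr (0, y)) ≤ 1) ∧
  c (inl 1) + c (inl 2) + c (inl 0) + T 1 c + T 2 c ≤ 2 ∧
  c (inl 1) + c (inl 0) / 2 + T 2 c ≤ 1 ∧
  c (inl 2) + c (inl 0) / 2 + T 1 c ≤ 1

section Tlemmas

variable {c c' : (Fin 3 ⊕ Fin 3 × Fin m) → ℕ}

lemma T_eq {a : Fin 3} (h : ∀ y, c' (inr (a, y)) = c (inr (a, y))) : T a c' = T a c :=
  Finset.sum_congr rfl (fun y _ => by rw [h y])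

lemma single_le_T (a : Fin 3) (y : Fin m) : c (inr (a, y)) / 2 ≤ T a c := by
  unfold T
  exact Finset.single_le_sum (f := fun z => c (inr (a, z)) / 2)
    (fun z _ => Nat.zero_le _) (Finset.mem_univ y)

lemma T_src {a : Fin 3} {y : Fin m} (h2 : 2 ≤ c (inr (a, y)))
    (hat : c' (inr (a, y)) = c (inr (a, y)) - 2)
    (hoth : ∀ z, z ≠ y → c' (inr (a, z)) = c (inr (a, z))) : T a c' + 1 = T a c := by
  have e1 := Finset.add_sum_erase Finset.univ (fun z => c' (inr (a, z)) / 2) (Finset.mem_univ y)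
  have e2 := Finset.add_sum_erase Finset.univ (fun z => c (inr (a, z)) / 2) (Finset.mem_univ y)
  have he : ∑ z ∈ Finset.univ.erase y, c' (inr (a, z)) / 2
      = ∑ z ∈ Finset.univ.erase y, c (inr (a, z)) / 2 :=
    Finset.sum_congr rfl (fun z hz => by rw [hoth z (Finset.ne_of_mem_erase hz)])
  unfold T
  rw [← e1, ← e2, he, hat]
  omega

lemma T_tgt {a : Fin 3} {y : Fin m} (hat : c' (inr (a, y)) = c (inr (a, y)) + 1)
    (hoth : ∀ z, z ≠ y → c' (inr (a, z)) = c (inr (a, z))) :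
    T a c ≤ T a c' ∧ T a c' ≤ T a c + 1 := by
  have e1 := Finset.add_sum_erase Finset.univ (fun z => c' (inr (a, z)) / 2) (Finset.mem_univ y)
  have e2 := Finset.add_sum_erase Finset.univ (fun z => c (inr (a, z)) / 2) (Finset.mem_univ y)
  have he : ∑ z ∈ Finset.univ.erase y, c' (inr (a, z)) / 2
      = ∑ z ∈ Finset.univ.erase y, c (inr (a, z)) / 2 :=
    Finset.sum_congr rfl (fun z hz => by rw [hoth z (Finset.ne_of_mem_erase hz)])
  unfold T
  rw [← e1, ← e2, he, hat]
  constructor <;> omega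

lemma T_both {a : Fin 3} {y z : Fin m} (hyz : y ≠ z) (h2 : 2 ≤ c (inr (a, y)))
    (hsrc : c' (inr (a, y)) = c (inr (a, y)) - 2)
    (htgt : c' (inr (a, z)) = c (inr (a, z)) + 1)
    (hoth : ∀ w, w ≠ y → w ≠ z → c' (inr (a, w)) = c (inr (a, w))) : T a c' ≤ T a c := by
  have hzy : z ∈ Finset.univ.erase y := Finset.mem_erase.mpr ⟨hyz.symm, Finset.mem_univ z⟩
  have e1 := Finset.add_sum_erase Finset.univ (fun w => c' (inr (a, w)) / 2) (Finset.mem_univ y)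
  have e2 := Finset.add_sum_erase Finset.univ (fun w => c (inr (a, w)) / 2) (Finset.mem_univ y)
  have e3 := Finset.add_sum_erase (Finset.univ.erase y) (fun w => c' (inr (a, w)) / 2) hzy
  have e4 := Finset.add_sum_erase (Finset.univ.erase y) (fun w => c (inr (a, w)) / 2) hzy
  have he : ∑ w ∈ (Finset.univ.erase y).erase z, c' (inr (a, w)) / 2
      = ∑ w ∈ (Finset.univ.erase y).erase z, c (inr (a, w)) / 2 :=
    Finset.sum_congr rfl (fun w hw => by
      rw [hoth w (Finset.ne_of_mem_erase (Finset.mem_of_mem_erase hw))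
        (Finset.ne_of_mem_erase hw)])
  unfold T
  rw [← e1, ← e2, ← e3, ← e4, he, hsrc, htgt]
  omega

end Tlemmas

lemma inv_preserved {y0 : Fin m} {c c' : (Fin 3 ⊕ Fin 3 × Fin m) → ℕ}
    (hI : Inv y0 c) (hmv : PebblingMove (KG m) c c') : Inv y0 c' := by
  obtain ⟨u, v, hadj, hcu, h1, h2, h3⟩ := hmv
  obtain ⟨i1, i2, i3, i4, i5⟩ := hI
  rcases u with b | ⟨b, y⟩
  · rcases fin3_cases b with rfl | rfl | rfl
    · -- u = inl 0
      rcases v with b' | ⟨b', z⟩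
      · rcases fin3_cases b' with rfl | rfl | rfl
        · exact absurd rfl hadj.ne
        · -- inl 0 → inl 1
          have hv0 : c' (inl 0) = c (inl 0) - 2 := h1
          have hv1 : c' (inl 1) = c (inl 1) + 1 := h2
          have hv2 : c' (inl 2) = c (inl 2) := h3 _ (by simp) (by simp)
          have hcopy0 : ∀ w, c' (inr (0, w)) = c (inr (0, w)) :=
            fun w => h3 _ (by simp) (by simp)
          have hT1 : T 1 c' = T 1 c := T_eq (fun w => h3 _ (by simp) (by simp))
          have hT2 : T 2 c' = T 2 c := T_eq (fun w => h3 _ (by simp) (by simp))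
          exact ⟨by rw [hcopy0]; exact i1, fun w hw => by rw [hcopy0]; exact i2 w hw,
            by rw [hv0, hv1, hv2, hT1, hT2]; omega,
            by rw [hv0, hv1, hT2]; omega,
            by rw [hv0, hv2, hT1]; omega⟩
        · -- inl 0 → inl 2
          have hv0 : c' (inl 0) = c (inl 0) - 2 := h1
          have hv1 : c' (inl 1) = c (inl 1) := h3 _ (by simp) (by simp)
          have hv2 : c' (inl 2) = c (inl 2) + 1 := h2
          have hcopy0 : ∀ w, c' (inr (0, w)) = c (inr (0, w)) :=
            fun w => h3 _ (by simp) (by simp)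
          have hT1 : T 1 c' = T 1 c := T_eq (fun w => h3 _ (by simp) (by simp))
          have hT2 : T 2 c' = T 2 c := T_eq (fun w => h3 _ (by simp) (by simp))
          exact ⟨by rw [hcopy0]; exact i1, fun w hw => by rw [hcopy0]; exact i2 w hw,
            by rw [hv0, hv1, hv2, hT1, hT2]; omega,
            by rw [hv0, hv1, hT2]; omega,
            by rw [hv0, hv2, hT1]; omega⟩
      · -- u = inl 0, v = inr (b', z) with b' ≠ 0
        have hb' : (0 : Fin 3) ≠ b' := by simpa using adj_lr.mp hadj
        rcases fin3_cases b' with rfl | rfl | rfl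
        · exact absurd rfl hb'
        · -- inl 0 → inr (1, z)
          have hv0 : c' (inl 0) = c (inl 0) - 2 := h1
          have hv1 : c' (inl 1) = c (inl 1) := h3 _ (by simp) (by simp)
          have hv2 : c' (inl 2) = c (inl 2) := h3 _ (by simp) (by simp)
          have hcopy0 : ∀ w, c' (inr (0, w)) = c (inr (0, w)) :=
            fun w => h3 _ (by simp) (by simp)
          have hT1 := T_tgt (a := 1) (y := z) h2
            (fun w hw => h3 _ (by simp) (by simp [hw]))
          have hT2 : T 2 c' = T 2 c := T_eq (fun w => h3 _ (by simp) (by simp))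
          exact ⟨by rw [hcopy0]; exact i1, fun w hw => by rw [hcopy0]; exact i2 w hw,
            by rw [hv0, hv1, hv2, hT2]; omega,
            by rw [hv0, hv1, hT2]; omega,
            by rw [hv0, hv2]; omega⟩
        · -- inl 0 → inr (2, z)
          have hv0 : c' (inl 0) = c (inl 0) - 2 := h1
          have hv1 : c' (inl 1) = c (inl 1) := h3 _ (by simp) (by simp)
          have hv2 : c' (inl 2) = c (inl 2) := h3 _ (by simp) (by simp)
          have hcopy0 : ∀ w, c' (inr (0, w)) = c (inr (0, w)) :=
            fun w => h3 _ (by simp) (by simp)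
          have hT2 := T_tgt (a := 2) (y := z) h2
            (fun w hw => h3 _ (by simp) (by simp [hw]))
          have hT1 : T 1 c' = T 1 c := T_eq (fun w => h3 _ (by simp) (by simp))
          exact ⟨by rw [hcopy0]; exact i1, fun w hw => by rw [hcopy0]; exact i2 w hw,
            by rw [hv0, hv1, hv2, hT1]; omega,
            by rw [hv0, hv1]; omega,
            by rw [hv0, hv2, hT1]; omega⟩
    · exact absurd hcu (by omega)
    · exact absurd hcu (by omega)
  · -- u = inr (b, y)
    rcases fin3_cases b with rfl | rfl | rfl
    · -- u in copy 0 : impossible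
      rcases eq_or_ne y y0 with rfl | hy
      · omega
      · have := i2 y hy; omega
    · -- u = inr (1, y)
      have hTy : c (inr (1, y)) / 2 ≤ T 1 c := single_le_T 1 y
      rcases v with b' | ⟨b', z⟩
      · have hb' : b' ≠ 1 := by simpa using adj_rl.mp hadj
        rcases fin3_cases b' with rfl | rfl | rfl
        · -- inr (1,y) → inl 0
          have hv0 : c' (inl 0) = c (inl 0) + 1 := h2
          have hv1 : c' (inl 1) = c (inl 1) := h3 _ (by simp) (by simp)
          have hv2 : c' (inl 2) = c (inl 2) := h3 _ (by simp) (by simp)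
          have hcopy0 : ∀ w, c' (inr (0, w)) = c (inr (0, w)) :=
            fun w => h3 _ (by simp) (by simp)
          have hT1 : T 1 c' + 1 = T 1 c := T_src hcu h1
            (fun w hw => h3 _ (by simp [hw]) (by simp))
          have hT2 : T 2 c' = T 2 c := T_eq (fun w => h3 _ (by simp) (by simp))
          exact ⟨by rw [hcopy0]; exact i1, fun w hw => by rw [hcopy0]; exact i2 w hw,
            by rw [hv0, hv1, hv2, hT2]; omega,
            by rw [hv0, hv1, hT2]; omega,
            by rw [hv0, hv2]; omega⟩
        · exact absurd rfl hb'
        · -- inr (1,y) → inl 2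
          have hv0 : c' (inl 0) = c (inl 0) := h3 _ (by simp) (by simp)
          have hv1 : c' (inl 1) = c (inl 1) := h3 _ (by simp) (by simp)
          have hv2 : c' (inl 2) = c (inl 2) + 1 := h2
          have hcopy0 : ∀ w, c' (inr (0, w)) = c (inr (0, w)) :=
            fun w => h3 _ (by simp) (by simp)
          have hT1 : T 1 c' + 1 = T 1 c := T_src hcu h1
            (fun w hw => h3 _ (by simp [hw]) (by simp))
          have hT2 : T 2 c' = T 2 c := T_eq (fun w => h3 _ (by simp) (by simp))
          exact ⟨by rw [hcopy0]; exact i1, fun w hw => by rw [hcopy0]; exact i2 w hw,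
            by rw [hv0, hv1, hv2, hT2]; omega,
            by rw [hv0, hv1, hT2]; omega,
            by rw [hv0, hv2]; omega⟩
      · -- inr (1,y) → inr (b', z): b' = 1, z ≠ y
        obtain ⟨hb', hyz⟩ := adj_rr.mp hadj
        subst hb'
        have hv0 : c' (inl 0) = c (inl 0) := h3 _ (by simp) (by simp)
        have hv1 : c' (inl 1) = c (inl 1) := h3 _ (by simp) (by simp)
        have hv2 : c' (inl 2) = c (inl 2) := h3 _ (by simp) (by simp)
        have hcopy0 : ∀ w, c' (inr (0, w)) = c (inr (0, w)) :=
          fun w => h3 _ (by simp) (by simp)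
        have hT1 : T 1 c' ≤ T 1 c := T_both hyz hcu h1 h2
          (fun w hw1 hw2 => h3 _ (by simp [hw1]) (by simp [hw2]))
        have hT2 : T 2 c' = T 2 c := T_eq (fun w => h3 _ (by simp) (by simp))
        exact ⟨by rw [hcopy0]; exact i1, fun w hw => by rw [hcopy0]; exact i2 w hw,
          by rw [hv0, hv1, hv2, hT2]; omega,
          by rw [hv0, hv1, hT2]; omega,
          by rw [hv0, hv2]; omega⟩
    · -- u = inr (2, y)
      have hTy : c (inr (2, y)) / 2 ≤ T 2 c := single_le_T 2 y
      rcases v with b' | ⟨b', z⟩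
      · have hb' : b' ≠ 2 := by simpa using adj_rl.mp hadj
        rcases fin3_cases b' with rfl | rfl | rfl
        · -- inr (2,y) → inl 0
          have hv0 : c' (inl 0) = c (inl 0) + 1 := h2
          have hv1 : c' (inl 1) = c (inl 1) := h3 _ (by simp) (by simp)
          have hv2 : c' (inl 2) = c (inl 2) := h3 _ (by simp) (by simp)
          have hcopy0 : ∀ w, c' (inr (0, w)) = c (inr (0, w)) :=
            fun w => h3 _ (by simp) (by simp)
          have hT2 : T 2 c' + 1 = T 2 c := T_src hcu h1
            (fun w hw => h3 _ (by simp [hw]) (by simp))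
          have hT1 : T 1 c' = T 1 c := T_eq (fun w => h3 _ (by simp) (by simp))
          exact ⟨by rw [hcopy0]; exact i1, fun w hw => by rw [hcopy0]; exact i2 w hw,
            by rw [hv0, hv1, hv2, hT1]; omega,
            by rw [hv0, hv1]; omega,
            by rw [hv0, hv2, hT1]; omega⟩
        · -- inr (2,y) → inl 1
          have hv0 : c' (inl 0) = c (inl 0) := h3 _ (by simp) (by simp)
          have hv1 : c' (inl 1) = c (inl 1) + 1 := h2
          have hv2 : c' (inl 2) = c (inl 2) := h3 _ (by simp) (by simp)
          have hcopy0 : ∀ w, c' (inr (0, w)) = c (inr (0, w)) :=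
            fun w => h3 _ (by simp) (by simp)
          have hT2 : T 2 c' + 1 = T 2 c := T_src hcu h1
            (fun w hw => h3 _ (by simp [hw]) (by simp))
          have hT1 : T 1 c' = T 1 c := T_eq (fun w => h3 _ (by simp) (by simp))
          exact ⟨by rw [hcopy0]; exact i1, fun w hw => by rw [hcopy0]; exact i2 w hw,
            by rw [hv0, hv1, hv2, hT1]; omega,
            by rw [hv0, hv1]; omega,
            by rw [hv0, hv2, hT1]; omega⟩
        · exact absurd rfl hb'
      · -- inr (2,y) → inr (b', z): b' = 2, z ≠ y
        obtain ⟨hb', hyz⟩ := adj_rr.mp hadj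
        subst hb'
        have hv0 : c' (inl 0) = c (inl 0) := h3 _ (by simp) (by simp)
        have hv1 : c' (inl 1) = c (inl 1) := h3 _ (by simp) (by simp)
        have hv2 : c' (inl 2) = c (inl 2) := h3 _ (by simp) (by simp)
        have hcopy0 : ∀ w, c' (inr (0, w)) = c (inr (0, w)) :=
          fun w => h3 _ (by simp) (by simp)
        have hT2 : T 2 c' ≤ T 2 c := T_both hyz hcu h1 h2
          (fun w hw1 hw2 => h3 _ (by simp [hw1]) (by simp [hw2]))
        have hT1 : T 1 c' = T 1 c := T_eq (fun w => h3 _ (by simp) (by simp))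
        exact ⟨by rw [hcopy0]; exact i1, fun w hw => by rw [hcopy0]; exact i2 w hw,
          by rw [hv0, hv1, hv2, hT1]; omega,
          by rw [hv0, hv1]; omega,
          by rw [hv0, hv2, hT1]; omega⟩

lemma sum_ite (y0 : Fin m) (A B : ℕ) : ∑ y, (if y = y0 then A else B) = A + (m - 1) * B := by
  rw [← Finset.add_sum_erase _ _ (Finset.mem_univ y0), if_pos rfl]
  congr 1
  rw [Finset.sum_congr rfl (fun z hz => if_neg (Finset.ne_of_mem_erase hz)),
    Finset.sum_const, Finset.card_erase_of_mem (Finset.mem_univ _), Finset.card_univ,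
    Fintype.card_fin, smul_eq_mul]

lemma w0_sum (y0 : Fin m) : ∑ v, w0 y0 v = 3 * m + 3 := by
  have hm : 0 < m := y0.pos
  rw [total_decomp (c := w0 y0) (i := 0) (j := 1) (k := 2) (by decide) (by decide) (by decide)]
  have h0 : ∑ y, w0 y0 (inr (0, y)) = 0 + (m - 1) * 1 := by
    rw [← sum_ite y0 0 1]
    exact Finset.sum_congr rfl (fun y _ => by simp [w0])
  have h1 : ∑ y, w0 y0 (inr (1, y)) = 3 + (m - 1) * 1 := by
    rw [← sum_ite y0 3 1]
    exact Finset.sum_congr rfl (fun y _ => by simp [w0])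
  have h2 : ∑ y, w0 y0 (inr (2, y)) = 3 + (m - 1) * 1 := by
    rw [← sum_ite y0 3 1]
    exact Finset.sum_congr rfl (fun y _ => by simp [w0])
  rw [h0, h1, h2]
  simp only [w0, Sum.elim_inl]
  omega

lemma w0_T1 (y0 : Fin m) : T 1 (w0 y0) = 1 := by
  unfold T
  have : ∀ y : Fin m, w0 y0 (inr (1, y)) / 2 = if y = y0 then 1 else 0 := by
    intro y
    rcases eq_or_ne y y0 with rfl | h
    · simp [w0]
    · simp [w0, h]
  rw [Finset.sum_congr rfl (fun y _ => this y), sum_ite y0 1 0]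
  omega

lemma w0_T2 (y0 : Fin m) : T 2 (w0 y0) = 1 := by
  unfold T
  have : ∀ y : Fin m, w0 y0 (inr (2, y)) / 2 = if y = y0 then 1 else 0 := by
    intro y
    rcases eq_or_ne y y0 with rfl | h
    · simp [w0]
    · simp [w0, h]
  rw [Finset.sum_congr rfl (fun y _ => this y), sum_ite y0 1 0]
  omega

lemma w0_inv (y0 : Fin m) : Inv y0 (w0 y0) := by
  refine ⟨by simp [w0], fun y hy => by simp [w0, hy], ?_, ?_, ?_⟩ <;>
    simp [w0, w0_T1, w0_T2]

lemma inv_reach {y0 : Fin m} {c' : (Fin 3 ⊕ Fin 3 × Fin m) → ℕ}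
    (hr : PebblingReach (KG m) (w0 y0) c') : Inv y0 c' := by
  induction hr with
  | refl => exact w0_inv y0
  | tail _ hstep ih => exact inv_preserved ih hstep

lemma w0_not_solvable (y0 : Fin m) :
    ¬ PebblingSolvable (KG m) (w0 y0) (inr (0, y0)) 1 := by
  rintro ⟨c', hr, hc⟩
  have := (inv_reach hr).1
  omega

end Lower

end PebAux


open PebAux Sum

/-- The neighbourhood corona `K 3 ⋆ K m` is Class 1: `π(K 3 ⋆ K m) = 3 m + 4`,
one more than its order `3 m + 3`. -/
theorem pebblingNumber_K3_ncorona_Km (m : ℕ) (hm : 1 ≤ m) :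
    pebblingNumber (ncoronaProd (⊤ : SimpleGraph (Fin 3)) (⊤ : SimpleGraph (Fin m))) 1 =
      ((3 * m + 4 : ℕ) : ℕ∞) := by
  have hmem : (3 * m + 4) ∈ pebblingSet (KG m) 1 := by
    intro c hc r
    rcases r with i | ⟨i, x⟩
    · rcases fin3_cases i with rfl | rfl | rfl
      · exact hub_case hm (i := 0) (j := 1) (k := 2) (by decide) (by decide) (by decide) c hc
      · exact hub_case hm (i := 1) (j := 0) (k := 2) (by decide) (by decide) (by decide) c hc
      · exact hub_case hm (i := 2) (j := 0) (k := 1) (by decide) (by decide) (by decide) c hc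
    · rcases fin3_cases i with rfl | rfl | rfl
      · exact leaf_case hm (i := 0) (j := 1) (k := 2) (by decide) (by decide) (by decide) x c hc
      · exact leaf_case hm (i := 1) (j := 0) (k := 2) (by decide) (by decide) (by decide) x c hc
      · exact leaf_case hm (i := 2) (j := 0) (k := 1) (by decide) (by decide) (by decide) x c hc
  have hnot : ∀ k, k < 3 * m + 4 → k ∉ pebblingSet (KG m) 1 := by
    intro k hk hmem'
    set y0 : Fin m := ⟨0, hm⟩ with hy0
    obtain ⟨d, hd1, hd2⟩ := exists_shrink (w0 y0) k (by rw [w0_sum]; omega)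
    exact w0_not_solvable y0 (solvable_mono hd1 (hmem' d hd2 (inr (0, y0))))
  show sInf ((↑) '' pebblingSet (KG m) 1) = ((3 * m + 4 : ℕ) : ℕ∞)
  apply le_antisymm
  · exact sInf_le ⟨_, hmem, rfl⟩
  · apply le_sInf
    rintro x ⟨k, hk, rfl⟩
    by_contra hlt
    push_neg at hlt
    have hklt : k < 3 * m + 4 := by exact_mod_cast hlt
    exact hnot k hklt hk
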